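/- Let m ≥ 1 and k ≥ 1 be integers and let v be the coverage function determined by a finite type Y and A : Fin m → Finset Y. Then the function x ↦ G_k^v(x) (defined by the lottery formula, which is a polynomial in x) is concave on the polytope P_k: ConcaveOn ℝ P_k G_k^v. (The k-bounded-lottery rounding scheme is convex for coverage valuations.) -/

import Mathlib

open Finset

/-- Per-draw weights: project `j` is drawn with probability `x j / k`, and
`none` (no project) with the remaining probability `1 - (∑ j, x j)/k`. -/
noncomputable def lotW {m : ℕ} (k : ℕ) (x : Fin m → ℝ) : Option (Fin m) → ℝ
  | some j => x j / k
  | none => 1 - (∑ j, x j) / k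

/-- Probability of a particular draw function `f : Fin t → Option (Fin m)`,
with per-draw weights determined by `k` and `x`. -/
noncomputable def lotP {m : ℕ} (k t : ℕ) (x : Fin m → ℝ)
    (f : Fin t → Option (Fin m)) : ℝ :=
  ∏ s, lotW k x (f s)

/-- The set of projects chosen by a draw function `f`. -/
def lotProj {m t : ℕ} (f : Fin t → Option (Fin m)) : Finset (Fin m) :=
  Finset.univ.filter (fun j => ∃ s, f s = some j)


/-- Expected value of the set function `v` under the `k`-bounded-lottery
rounding scheme `r_k` applied to `x`. -/
noncomputable def lotG {m : ℕ} (k : ℕ) (v : Finset (Fin m) → ℝ)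
    (x : Fin m → ℝ) : ℝ :=
  ∑ f : Fin k → Option (Fin m), lotP k k x f * v (lotProj f)

/-!
For a coverage function, `v (lotProj f)` counts the elements `y` covered by the drawn projects,
so `G_k^v(x) = ∑ y, Pr[some draw lands in N_y] = ∑ y, (1 - (1 - x(N_y)/k)^k)` with
`N_y = {j | y ∈ A j}`: the `k` draws are independent and each misses `N_y` with probability
`1 - x(N_y)/k`. On `P_k` this base is an affine, nonnegative function of `x`, and `t ↦ t^k` is
convex on `[0, ∞)`, so every summand is concave.
-/

section Lottery

variable {m k t : ℕ} (x : Fin m → ℝ)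

lemma sum_lotW : ∑ o, lotW k x o = 1 := by
  rw [Fintype.sum_option]
  simp only [lotW, sum_div]
  ring

lemma sum_lotP_piFinset (C : Finset (Option (Fin m))) :
    ∑ f ∈ Fintype.piFinset (fun _ : Fin t => C), lotP k t x f =
      (∑ o ∈ C, lotW k x o) ^ t := by
  simp only [lotP]
  rw [← prod_univ_sum, prod_const, card_univ, Fintype.card_fin]

lemma sum_lotP : ∑ f, lotP k t x f = 1 := by
  have h := sum_lotP_piFinset (t := t) (k := k) x univ
  rwa [Fintype.piFinset_univ, sum_lotW, one_pow] at h

lemma sum_lotW_compl_map_some (T : Finset (Fin m)) :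
    ∑ o ∈ (T.map .some)ᶜ, lotW k x o = 1 - (∑ j ∈ T, x j) / k := by
  rw [eq_sub_iff_add_eq, ← sum_lotW x, ← sum_compl_add_sum (T.map .some), sum_map, sum_div]
  rfl

lemma disjoint_lotProj_iff {f : Fin t → Option (Fin m)} {T : Finset (Fin m)} :
    Disjoint (lotProj f) T ↔ ∀ s, f s ∈ (T.map .some)ᶜ := by
  simp only [lotProj, disjoint_left, mem_filter_univ, forall_exists_index, mem_compl, mem_map,
    Function.Embedding.some_apply, not_exists, not_and]
  exact ⟨fun h s j hj hs => h s hs.symm hj, fun h j s hs hj => h s j hj hs.symm⟩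

lemma sum_lotP_disjoint (T : Finset (Fin m)) :
    ∑ f with Disjoint (lotProj f) T, lotP k t x f = (1 - (∑ j ∈ T, x j) / k) ^ t := by
  have : ({f | Disjoint (lotProj f) T} : Finset (Fin t → Option (Fin m))) =
      Fintype.piFinset fun _ => (T.map .some)ᶜ := by
    ext f
    simp only [mem_filter_univ, disjoint_lotProj_iff, Fintype.mem_piFinset]
  rw [this, sum_lotP_piFinset, sum_lotW_compl_map_some]

lemma lotG_not_disjoint (T : Finset (Fin m)) :
    lotG k (fun S => if Disjoint S T then 0 else 1) x = 1 - (1 - (∑ j ∈ T, x j) / k) ^ k := by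
  calc lotG k _ x = ∑ f, lotP k k x f - ∑ f with Disjoint (lotProj f) T, lotP k k x f := by
        rw [lotG, sum_filter, ← sum_sub_distrib]
        refine sum_congr rfl fun f _ => ?_
        split_ifs <;> ring
    _ = _ := by rw [sum_lotP, sum_lotP_disjoint]

lemma lotG_sum {Y : Type*} (U : Finset Y) (v : Y → Finset (Fin m) → ℝ) :
    lotG k (fun S => ∑ y ∈ U, v y S) x = ∑ y ∈ U, lotG k (v y) x := by
  simp only [lotG, mul_sum]
  exact sum_comm

end Lottery

lemma card_biUnion_eq_sum {ι Y : Type*} [Fintype ι] [DecidableEq ι] [DecidableEq Y]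
    (A : ι → Finset Y) (S : Finset ι) :
    ((S.biUnion A).card : ℝ) =
      ∑ y ∈ univ.biUnion A, if Disjoint S ({j | y ∈ A j} : Finset ι) then 0 else 1 := by
  have : S.biUnion A = {y ∈ univ.biUnion A | ¬ Disjoint S ({j | y ∈ A j} : Finset ι)} := by
    ext y
    simp only [mem_biUnion, mem_filter, mem_univ, true_and, not_disjoint_iff]
    exact ⟨fun ⟨j, hj, hy⟩ => ⟨⟨j, hy⟩, j, hj, hy⟩, fun ⟨_, j, hj, hy⟩ => ⟨j, hj, hy⟩⟩
  rw [this, card_filter]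
  push_cast
  refine sum_congr rfl fun y _ => ?_
  split_ifs <;> simp

lemma ConcaveOn.fun_sum {E β ι : Type*} [AddCommMonoid E] [Module ℝ E] [PartialOrder β]
    [AddCommMonoid β] [IsOrderedAddMonoid β] [Module ℝ β] {s : Set E} (hs : Convex ℝ s)
    {U : Finset ι} {g : ι → E → β} (hg : ∀ i ∈ U, ConcaveOn ℝ s (g i)) :
    ConcaveOn ℝ s (fun x => ∑ i ∈ U, g i x) := by
  simp_rw [← Finset.sum_apply]
  exact sum_induction g (ConcaveOn ℝ s) (fun _ _ => ConcaveOn.add) (concaveOn_const 0 hs) hg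

lemma concaveOn_one_sub_pow_affineMap {E : Type*} [AddCommGroup E] [Module ℝ E]
    (g : E →ᵃ[ℝ] ℝ) (n : ℕ) :
    ConcaveOn ℝ {x | 0 ≤ g x} (fun x => 1 - g x ^ n) := by
  have h : ConvexOn ℝ (g ⁻¹' Set.Ici 0) (fun x => g x ^ n) := (convexOn_pow n).comp_affineMap g
  exact (h.neg.add_const 1).congr fun x _ => neg_add_eq_sub _ _

lemma convex_boundedPolytope {ι : Type*} [Fintype ι] (r : ℝ) :
    Convex ℝ {x : ι → ℝ | (∀ j, 0 ≤ x j ∧ x j ≤ 1) ∧ ∑ j, x j ≤ r} := by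
  have : {x : ι → ℝ | (∀ j, 0 ≤ x j ∧ x j ≤ 1) ∧ ∑ j, x j ≤ r} =
      (⋂ j, {x | 0 ≤ x j} ∩ {x | x j ≤ 1}) ∩ {x | ∑ j, x j ≤ r} := by
    ext; simp
  rw [this]
  exact (convex_iInter fun j => (convex_halfSpace_ge (LinearMap.proj j).isLinear 0).inter
    (convex_halfSpace_le (LinearMap.proj j).isLinear 1)).inter
    (convex_halfSpace_le (f := fun x : ι → ℝ => ∑ j, x j)
      ⟨fun x y => sum_add_distrib, fun c x => (mul_sum ..).symm⟩ r)

lemma lotG_coverage {m : ℕ} (k : ℕ) {Y : Type*} [DecidableEq Y] (A : Fin m → Finset Y)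
    (v : Finset (Fin m) → ℝ) (hv : ∀ S, v S = ((S.biUnion A).card : ℝ)) (x : Fin m → ℝ) :
    lotG k v x = ∑ y ∈ univ.biUnion A, (1 - (1 - (∑ j with y ∈ A j, x j) / k) ^ k) := by
  have hv' : v = fun S => ∑ y ∈ univ.biUnion A,
      if Disjoint S ({j | y ∈ A j} : Finset (Fin m)) then 0 else 1 :=
    funext fun S => (hv S).trans (card_biUnion_eq_sum A S)
  simp only [hv', lotG_sum, lotG_not_disjoint]

lemma concaveOn_one_sub_pow_one_sub_sum_div {ι : Type*} [Fintype ι] (k : ℕ) (T : Finset ι) :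
    ConcaveOn ℝ {x : ι → ℝ | (∀ j, 0 ≤ x j ∧ x j ≤ 1) ∧ ∑ j, x j ≤ k}
      (fun x => 1 - (1 - (∑ j ∈ T, x j) / k) ^ k) := by
  let g : (ι → ℝ) →ᵃ[ℝ] ℝ :=
    AffineMap.const ℝ _ (1 : ℝ) - ((k : ℝ)⁻¹ • ∑ j ∈ T, LinearMap.proj j).toAffineMap
  have hg : ∀ x, g x = 1 - (∑ j ∈ T, x j) / k := fun x => by
    simp [g, div_eq_inv_mul]
  simp only [← hg]
  refine (concaveOn_one_sub_pow_affineMap g k).subset ?_ (convex_boundedPolytope _)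
  rintro x ⟨hx, hxk⟩
  have hT : ∑ j ∈ T, x j ≤ k :=
    (sum_le_sum_of_subset_of_nonneg (subset_univ T) fun j _ _ => (hx j).1).trans hxk
  simpa [hg] using div_le_one_of_le₀ hT k.cast_nonneg

theorem stmt6_general (m k : ℕ)
    (Y : Type) [DecidableEq Y] (A : Fin m → Finset Y)
    (v : Finset (Fin m) → ℝ)
    (hv : ∀ S : Finset (Fin m), v S = ((S.biUnion A).card : ℝ)) :
    ConcaveOn ℝ
      {x : Fin m → ℝ | (∀ j, 0 ≤ x j ∧ x j ≤ 1) ∧ ∑ j, x j ≤ (k : ℝ)}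
      (lotG k v) := by
  rw [funext (lotG_coverage k A v hv)]
  exact ConcaveOn.fun_sum (convex_boundedPolytope _) fun y _ =>
    concaveOn_one_sub_pow_one_sub_sum_div k _

theorem stmt6 (m k : ℕ) (hm : 1 ≤ m) (hk : 1 ≤ k)
    (Y : Type) [Fintype Y] [DecidableEq Y] (A : Fin m → Finset Y)
    (v : Finset (Fin m) → ℝ)
    (hv : ∀ S : Finset (Fin m), v S = ((S.biUnion A).card : ℝ)) :
    ConcaveOn ℝ
      {x : Fin m → ℝ | (∀ j, 0 ≤ x j ∧ x j ≤ 1) ∧ ∑ j, x j ≤ (k : ℝ)}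
      (lotG k v) :=
  stmt6_general m k Y A v hv
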